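/- Let g be a 2n-dimensional real nilpotent Lie algebra with n ≥ 3 and a complex structure J. If g_k ∩ J(g_k) = {0} and dim g_{k+1} = 1 + dim g_k for some k ≥ 1, then g_{k+1} ∩ J(g_{k+1}) = {0}. -/

import Mathlib

/-!
Write `A := g_{k+1} ∩ J g_{k+1}`; it is `J`-stable. If `W ∈ g_k` and `J W ∈ g_{k+1}`, the
integrability of `J` shows that `[J W, Y] + [W, J Y]` and its image under `J` both lie in `g_k`,
so it vanishes because `g_k ∩ J g_k = 0`; hence `J W ∈ g_k` and `W = 0`. Thus `A ∩ g_k = 0`, and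
`dim g_{k+1} = 1 + dim g_k` forces `dim A ≤ 1`. Since `J² = -1`, `J` has no real eigenvector,
so a `J`-stable subspace of dimension at most one is zero.
-/

/-- The ascending central series of a Lie algebra:
`acs g 0 = 0`, `acs g (k+1) = {X | [X,g] ⊆ acs g k}`. -/
def acs (g : Type*) [LieRing g] [LieAlgebra ℝ g] : ℕ → Submodule ℝ g
  | 0 => ⊥
  | k + 1 =>
    { carrier := {X : g | ∀ Y : g, ⁅X, Y⁆ ∈ acs g k}
      zero_mem' := by intro Y; simp
      add_mem' := by
        intro a b ha hb Y
        rw [add_lie]; exact (acs g k).add_mem (ha Y) (hb Y)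
      smul_mem' := by
        intro c x hx Y
        rw [smul_lie]; exact (acs g k).smul_mem c (hx Y) }

section ComplexStructure

variable {K M : Type*}

lemma Submodule.mem_inf_map_iff_of_apply_apply [Ring K] [AddCommGroup M] [Module K M]
    {J : M →ₗ[K] M} (hJ : ∀ x, J (J x) = -x) {A : Submodule K M} {x : M} :
    x ∈ A ⊓ A.map J ↔ x ∈ A ∧ J x ∈ A := by
  constructor
  · rintro ⟨hx, y, hy, rfl⟩
    exact ⟨hx, by simpa [hJ] using A.neg_mem hy⟩
  · rintro ⟨hx, hJx⟩
    exact ⟨hx, -J x, A.neg_mem hJx, by simp [hJ]⟩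

lemma Submodule.apply_mem_inf_map [Ring K] [AddCommGroup M] [Module K M]
    {J : M →ₗ[K] M} (hJ : ∀ x, J (J x) = -x) {A : Submodule K M} {x : M}
    (hx : x ∈ A ⊓ A.map J) : J x ∈ A ⊓ A.map J := by
  rw [Submodule.mem_inf_map_iff_of_apply_apply hJ] at hx ⊢
  exact ⟨hx.2, by simpa [hJ] using A.neg_mem hx.1⟩

lemma Submodule.eq_zero_of_inf_map_eq_bot [Ring K] [AddCommGroup M] [Module K M]
    {J : M →ₗ[K] M} (hJ : ∀ x, J (J x) = -x) {A : Submodule K M} (hA : A ⊓ A.map J = ⊥)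
    {x : M} (hx : x ∈ A) (hJx : J x ∈ A) : x = 0 := by
  have : x ∈ A ⊓ A.map J := (Submodule.mem_inf_map_iff_of_apply_apply hJ).2 ⟨hx, hJx⟩
  rwa [hA, Submodule.mem_bot] at this

lemma eq_zero_of_apply_eq_smul_of_apply_apply [Field K] [LinearOrder K] [IsStrictOrderedRing K]
    [AddCommGroup M] [Module K M] {J : M →ₗ[K] M} (hJ : ∀ x, J (J x) = -x) {v : M} {c : K}
    (hv : J v = c • v) : v = 0 := by
  have hsq : (c * c + 1) • v = 0 := by
    rw [add_smul, one_smul, ← smul_smul, ← hv, ← map_smul, ← hv, hJ, neg_add_cancel]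
  exact (smul_eq_zero.1 hsq).resolve_left
    (add_pos_of_nonneg_of_pos (mul_self_nonneg c) one_pos).ne'

lemma Submodule.eq_bot_of_finrank_le_one_of_apply_mem [Field K] [LinearOrder K]
    [IsStrictOrderedRing K] [AddCommGroup M] [Module K M] {J : M →ₗ[K] M}
    (hJ : ∀ x, J (J x) = -x) {A : Submodule K M} [FiniteDimensional K A]
    (hJA : ∀ x ∈ A, J x ∈ A) (hA : Module.finrank K A ≤ 1) : A = ⊥ := by
  obtain ⟨v, rfl⟩ := (A.finrank_le_one_iff_isPrincipal.1 hA).principal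
  obtain ⟨c, hc⟩ := Submodule.mem_span_singleton.1 (hJA v (Submodule.mem_span_singleton_self v))
  rw [eq_zero_of_apply_eq_smul_of_apply_apply hJ hc.symm, Submodule.span_singleton_eq_bot]

end ComplexStructure

lemma Submodule.finrank_add_finrank_le_of_disjoint_of_le {K V : Type*} [DivisionRing K]
    [AddCommGroup V] [Module K V] {U W T : Submodule K V} [FiniteDimensional K T]
    (hU : U ≤ T) (hW : W ≤ T) (hUW : Disjoint U W) :
    Module.finrank K U + Module.finrank K W ≤ Module.finrank K T := by
  have := Submodule.finiteDimensional_of_le hU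
  have := Submodule.finiteDimensional_of_le hW
  rw [← Submodule.finrank_sup_add_finrank_inf_eq, hUW.eq_bot, finrank_bot, add_zero]
  exact Submodule.finrank_mono (sup_le hU hW)

section CentralSeries

variable {g : Type*} [LieRing g] [LieAlgebra ℝ g]

lemma mem_acs_succ {k : ℕ} {X : g} : X ∈ acs g (k + 1) ↔ ∀ Y : g, ⁅X, Y⁆ ∈ acs g k :=
  Iff.rfl

lemma acs_le_acs_succ : ∀ k : ℕ, acs g k ≤ acs g (k + 1)
  | 0 => bot_le
  | k + 1 => fun _ hX Y => acs_le_acs_succ k (hX Y)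

variable {J : g →ₗ[ℝ] g}

lemma apply_lie_add_lie_apply_of_nijenhuis
    (hN : ∀ X Y : g, ⁅X, Y⁆ + J ⁅J X, Y⁆ + J ⁅X, J Y⁆ - ⁅J X, J Y⁆ = 0) (X Y : g) :
    J (⁅J X, Y⁆ + ⁅X, J Y⁆) = ⁅J X, J Y⁆ - ⁅X, Y⁆ := by
  rw [map_add, eq_sub_iff_add_eq, ← sub_eq_zero, ← hN X Y]
  abel

lemma eq_zero_of_mem_acs_of_apply_mem_acs_succ (hJ : ∀ X, J (J X) = -X)
    (hN : ∀ X Y : g, ⁅X, Y⁆ + J ⁅J X, Y⁆ + J ⁅X, J Y⁆ - ⁅J X, J Y⁆ = 0) {k : ℕ}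
    (h : acs g k ⊓ (acs g k).map J = ⊥) {W : g} (hW : W ∈ acs g k)
    (hJW : J W ∈ acs g (k + 1)) : W = 0 := by
  cases k with
  | zero => simpa [acs] using hW
  | succ m =>
    refine Submodule.eq_zero_of_inf_map_eq_bot hJ h hW (mem_acs_succ.2 fun Y => ?_)
    have hS : ⁅J W, Y⁆ + ⁅W, J Y⁆ = 0 := by
      refine Submodule.eq_zero_of_inf_map_eq_bot hJ h
        (add_mem (hJW Y) (acs_le_acs_succ m (hW (J Y)))) ?_
      rw [apply_lie_add_lie_apply_of_nijenhuis hN]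
      exact sub_mem (hJW (J Y)) (acs_le_acs_succ m (hW Y))
    rw [eq_neg_of_add_eq_zero_left hS]
    exact neg_mem (hW (J Y))

end CentralSeries

theorem acs_succ_inf_J_eq_bot_general (g : Type*) [LieRing g] [LieAlgebra ℝ g]
    (J : g →ₗ[ℝ] g) (hJ2 : ∀ X : g, J (J X) = -X)
    (hN : ∀ X Y : g, ⁅X, Y⁆ + J ⁅J X, Y⁆ + J ⁅X, J Y⁆ - ⁅J X, J Y⁆ = 0)
    (k : ℕ)
    (h : acs g k ⊓ (acs g k).map J = ⊥)
    (hd : Module.finrank ℝ (acs g (k + 1)) = 1 + Module.finrank ℝ (acs g k)) :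
    acs g (k + 1) ⊓ (acs g (k + 1)).map J = ⊥ := by
  set A := acs g (k + 1) ⊓ (acs g (k + 1)).map J
  have : FiniteDimensional ℝ (acs g (k + 1)) := Module.finite_of_finrank_pos (by omega)
  have : FiniteDimensional ℝ A := Submodule.finiteDimensional_of_le inf_le_left
  have hdisj : Disjoint A (acs g k) := Submodule.disjoint_def.2 fun W hWA hWk =>
    eq_zero_of_mem_acs_of_apply_mem_acs_succ hJ2 hN h hWk
      ((Submodule.mem_inf_map_iff_of_apply_apply hJ2).1 hWA).2
  have hdimA := Submodule.finrank_add_finrank_le_of_disjoint_of_le (U := A) inf_le_left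
    (acs_le_acs_succ k) hdisj
  exact Submodule.eq_bot_of_finrank_le_one_of_apply_mem hJ2
    (fun _ => Submodule.apply_mem_inf_map hJ2) (by omega)

/-- if `n ≥ 3`, `g_k ∩ J(g_k) = 0` and
`dim g_{k+1} = 1 + dim g_k` for some `k ≥ 1`, then `g_{k+1} ∩ J(g_{k+1}) = 0`. -/
theorem acs_succ_inf_J_eq_bot (g : Type*) [LieRing g] [LieAlgebra ℝ g]
    [FiniteDimensional ℝ g] (n : ℕ) (hn : 3 ≤ n)
    (hdim : Module.finrank ℝ g = 2 * n)
    (hnil : ∃ s : ℕ, acs g s = ⊤)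
    (J : g →ₗ[ℝ] g) (hJ2 : ∀ X : g, J (J X) = -X)
    (hN : ∀ X Y : g, ⁅X, Y⁆ + J ⁅J X, Y⁆ + J ⁅X, J Y⁆ - ⁅J X, J Y⁆ = 0)
    (k : ℕ) (hk : 1 ≤ k)
    (h : acs g k ⊓ (acs g k).map J = ⊥)
    (hd : Module.finrank ℝ (acs g (k + 1)) = 1 + Module.finrank ℝ (acs g k)) :
    acs g (k + 1) ⊓ (acs g (k + 1)).map J = ⊥ :=
  acs_succ_inf_J_eq_bot_general g J hJ2 hN k h hd
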